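/- arXiv:2302.05535 — 3 statements merged into one kernel-verified Lean document; each statement's English description precedes it below -/
import Mathlib

section
/- Let A be a bounded operator on a Hilbert space and ζ₀ a point with |ζ₀'| = 1 such that the closed half-plane Π₀ = { z : Im(ζ₀'(conj(ζ₀) − conj(z))) ≥ 0 } contains W(A). Then the operator μ(ζ₀, ζ₀', A) = (1/(2πi)) [ (ζ₀ I − A)^{-1} ζ₀' − (conj(ζ₀) I − A*)^{-1} conj(ζ₀') ] is positive semidefinite. -/
open scoped InnerProductSpace ComplexConjugate

/-!
With `B = ζ₀' (ζ₀ - A)⁻¹` the operator is `(B - B⋆) / (2πi)`, so its quadratic form at `v` is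
`-Im ⟪B v, v⟫ / π`. Writing `v = (ζ₀ - A) w` gives `⟪B v, v⟫ = conj (ζ₀' ⟪(ζ₀ - A) w, w⟫)`, and
`ζ₀' ⟪(ζ₀ - A) w, w⟫ = ‖w‖² ζ₀' (conj ζ₀ - conj z)` for a point `z` of the numerical range of `A`;
the half-plane hypothesis says exactly that its imaginary part is nonnegative.
-/

namespace ContinuousLinearMap

section RCLike

variable {𝕜 E : Type*} [RCLike 𝕜] [NormedAddCommGroup E] [InnerProductSpace 𝕜 E]

theorem inner_apply_self_eq_norm_sq_smul (T : E →L[𝕜] E) {w : E} (hw : w ≠ 0) :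
    ⟪T w, w⟫_𝕜 = ‖w‖ ^ 2 • ⟪T ((‖w‖⁻¹ : 𝕜) • w), (‖w‖⁻¹ : 𝕜) • w⟫_𝕜 := by
  have hw' : (‖w‖ : 𝕜) ≠ 0 := by exact_mod_cast norm_ne_zero_iff.mpr hw
  rw [map_smul, inner_smul_left, inner_smul_right, RCLike.conj_inv, RCLike.conj_ofReal,
    RCLike.real_smul_eq_coe_mul]
  push_cast
  field_simp

theorem inner_ring_inverse_apply_self {T : E →L[𝕜] E} (hT : IsUnit T) (v : E) :
    ⟪Ring.inverse T v, v⟫_𝕜 = conj ⟪T (Ring.inverse T v), Ring.inverse T v⟫_𝕜 := by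
  have hv : T (Ring.inverse T v) = v := DFunLike.congr_fun (Ring.mul_inverse_cancel T hT) v
  conv_lhs => arg 3; rw [← hv]
  exact (inner_conj_symm _ _).symm

theorem inner_smul_one_sub_apply_self (A : E →L[𝕜] E) (ζ : 𝕜) {q : E} (hq : ‖q‖ = 1) :
    ⟪(ζ • 1 - A) q, q⟫_𝕜 = conj ζ - conj ⟪q, A q⟫_𝕜 := by
  simp only [sub_apply, smul_apply, one_apply_eq_self, inner_sub_left, inner_smul_left,
    inner_self_eq_norm_sq_to_K, hq, inner_conj_symm]
  simp

theorem star_smul_one_sub [CompleteSpace E] (A : E →L[𝕜] E) (ζ : 𝕜) :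
    star (ζ • 1 - A) = conj ζ • 1 - adjoint A := by
  rw [star_sub, star_smul, star_one, star_eq_adjoint]
  rfl

end RCLike

variable {E : Type*} [NormedAddCommGroup E] [InnerProductSpace ℂ E]

theorem im_mul_inner_apply_self_nonneg {T : E →L[ℂ] E} {c : ℂ}
    (h : ∀ q : E, ‖q‖ = 1 → 0 ≤ (c * ⟪T q, q⟫_ℂ).im) (w : E) : 0 ≤ (c * ⟪T w, w⟫_ℂ).im := by
  rcases eq_or_ne w 0 with rfl | hw
  · simp
  rw [T.inner_apply_self_eq_norm_sq_smul hw, mul_smul_comm, Complex.smul_im]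
  exact mul_nonneg (by positivity) (h _ (norm_smul_inv_norm hw))

theorem inner_sub_star_apply_self [CompleteSpace E] (B : E →L[ℂ] E) (v : E) :
    ⟪(B - star B) v, v⟫_ℂ = 2 * (⟪B v, v⟫_ℂ).im * Complex.I := by
  rw [sub_apply, inner_sub_left, star_eq_adjoint, adjoint_inner_left, ← inner_conj_symm v,
    Complex.sub_conj]
  push_cast
  ring

end ContinuousLinearMap

theorem mu_positive_semidefinite_general {H : Type*} [NormedAddCommGroup H]
    [InnerProductSpace ℂ H] [CompleteSpace H] (A : H →L[ℂ] H)
    (ζ₀ ζ₀' : ℂ) (hζ₀ : ζ₀ ∉ spectrum ℂ A)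
    (hW : closure {z : ℂ | ∃ q : H, ‖q‖ = 1 ∧ z = ⟪q, A q⟫_ℂ} ⊆
      {z : ℂ | 0 ≤ (ζ₀' * (conj ζ₀ - conj z)).im}) :
    ∀ v : H,
      0 ≤ (⟪((1 / (2 * Real.pi * Complex.I)) •
            (ζ₀' • Ring.inverse (ζ₀ • (1 : H →L[ℂ] H) - A) -
             conj ζ₀' • Ring.inverse (conj ζ₀ • (1 : H →L[ℂ] H) -
               ContinuousLinearMap.adjoint A))) v, v⟫_ℂ).re ∧
      (⟪((1 / (2 * Real.pi * Complex.I)) •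
            (ζ₀' • Ring.inverse (ζ₀ • (1 : H →L[ℂ] H) - A) -
             conj ζ₀' • Ring.inverse (conj ζ₀ • (1 : H →L[ℂ] H) -
               ContinuousLinearMap.adjoint A))) v, v⟫_ℂ).im = 0 := by
  intro v
  set T : H →L[ℂ] H := ζ₀ • 1 - A
  have hT : IsUnit T := by
    simpa [T, Algebra.algebraMap_eq_smul_one] using spectrum.notMem_iff.mp hζ₀
  have hnum : ∀ w, 0 ≤ (ζ₀' * ⟪T w, w⟫_ℂ).im :=
    ContinuousLinearMap.im_mul_inner_apply_self_nonneg fun q hq =>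
      A.inner_smul_one_sub_apply_self ζ₀ hq ▸ hW (subset_closure ⟨q, hq, rfl⟩)
  set B : H →L[ℂ] H := ζ₀' • Ring.inverse T
  have hB : (⟪B v, v⟫_ℂ).im ≤ 0 := by
    rw [smul_apply, inner_smul_left, ContinuousLinearMap.inner_ring_inverse_apply_self hT,
      ← map_mul, Complex.conj_im]
    linarith [hnum (Ring.inverse T v)]
  have hπ : (Real.pi : ℂ) ≠ 0 := by exact_mod_cast Real.pi_ne_zero
  have hμ : conj (1 / (2 * Real.pi * Complex.I)) * (2 * (⟪B v, v⟫_ℂ).im * Complex.I) =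
      ((-(⟪B v, v⟫_ℂ).im / Real.pi : ℝ) : ℂ) := by
    simp only [map_div₀, map_mul, map_one, map_ofNat, Complex.conj_ofReal, Complex.conj_I]
    push_cast
    field_simp
  rw [← A.star_smul_one_sub, Ring.inverse_star, starRingEnd_apply, ← star_smul,
    smul_apply, inner_smul_left, B.inner_sub_star_apply_self, hμ,
    Complex.ofReal_re, Complex.ofReal_im]
  exact ⟨div_nonneg (neg_nonneg.mpr hB) Real.pi_pos.le, rfl⟩

/-- Let A be a bounded operator on a complex Hilbert space and ζ₀ a point
off the spectrum of A, ζ₀' a unit complex number, such that the closed half-plane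
Π₀ = { z : Im(ζ₀'(conj ζ₀ − conj z)) ≥ 0 } contains the closure of W(A).  Then
μ(ζ₀, ζ₀', A) = (1/(2πi)) [ ζ₀' (ζ₀ I − A)⁻¹ − conj(ζ₀') (conj(ζ₀) I − A*)⁻¹ ]
is positive semidefinite. -/
theorem mu_positive_semidefinite {H : Type*} [NormedAddCommGroup H]
    [InnerProductSpace ℂ H] [CompleteSpace H] (A : H →L[ℂ] H)
    (ζ₀ ζ₀' : ℂ) (hunit : ‖ζ₀'‖ = 1) (hζ₀ : ζ₀ ∉ spectrum ℂ A)
    (hW : closure {z : ℂ | ∃ q : H, ‖q‖ = 1 ∧ z = ⟪q, A q⟫_ℂ} ⊆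
      {z : ℂ | 0 ≤ (ζ₀' * (conj ζ₀ - conj z)).im}) :
    ∀ v : H,
      0 ≤ (⟪((1 / (2 * Real.pi * Complex.I)) •
            (ζ₀' • Ring.inverse (ζ₀ • (1 : H →L[ℂ] H) - A) -
             conj ζ₀' • Ring.inverse (conj ζ₀ • (1 : H →L[ℂ] H) -
               ContinuousLinearMap.adjoint A))) v, v⟫_ℂ).re ∧
      (⟪((1 / (2 * Real.pi * Complex.I)) •
            (ζ₀' • Ring.inverse (ζ₀ • (1 : H →L[ℂ] H) - A) -
             conj ζ₀' • Ring.inverse (conj ζ₀ • (1 : H →L[ℂ] H) -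
               ContinuousLinearMap.adjoint A))) v, v⟫_ℂ).im = 0 :=
  mu_positive_semidefinite_general A ζ₀ ζ₀' hζ₀ hW
end

section
/- Let μ(s) be a continuous family of positive semidefinite bounded self-adjoint operators on a Hilbert space for s in [a, b], and let f : [a, b] → C be continuous. Then ‖∫_a^b f(s) μ(s) ds‖ ≤ (max_{s∈[a,b]} |f(s)|) · ‖∫_a^b μ(s) ds‖. -/
/-!
For a positive operator `p`, expanding `0 ≤ re ⟪x - c • y, p (x - c • y)⟫` with `c` the phase of
`conj ⟪x, p y⟫` gives `2 ‖⟪x, p y⟫‖ ≤ re ⟪x, p x⟫ + re ⟪y, p y⟫`. Weighting by `‖f s‖ ≤ M` and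
integrating yields `2 ‖⟪x, (∫ f • μ) y⟫‖ ≤ M re (⟪x, A x⟫ + ⟪y, A y⟫) ≤ 2 M ‖A‖` for unit
vectors `x, y`, where `A = ∫ μ`.
-/

open scoped InnerProductSpace ComplexConjugate
open RCLike Set MeasureTheory

namespace ContinuousLinearMap

variable {𝕜 E : Type*} [RCLike 𝕜] [NormedAddCommGroup E] [InnerProductSpace 𝕜 E]

theorem IsPositive.re_inner_sub_smul_eq {T : E →L[𝕜] E} (hT : T.IsPositive) (x y : E) (c : 𝕜) :
    re ⟪x - c • y, T (x - c • y)⟫_𝕜 =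
      re ⟪x, T x⟫_𝕜 - 2 * re (c * ⟪x, T y⟫_𝕜) + ‖c‖ ^ 2 * re ⟪y, T y⟫_𝕜 := by
  have hyx : ⟪y, T x⟫_𝕜 = conj ⟪x, T y⟫_𝕜 := by
    rw [← hT.inner_left_eq_inner_right, inner_conj_symm]
  simp only [map_sub, map_smul, inner_sub_left, inner_sub_right, inner_smul_left,
    inner_smul_right, hyx, mul_sub, ← mul_assoc, RCLike.mul_conj, ← map_mul, conj_re,
    re_ofReal_mul, ← ofReal_pow]
  ring

theorem IsPositive.two_mul_norm_inner_le {T : E →L[𝕜] E} (hT : T.IsPositive) (x y : E) :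
    2 * ‖⟪x, T y⟫_𝕜‖ ≤ re ⟪x, T x⟫_𝕜 + re ⟪y, T y⟫_𝕜 := by
  set z := ⟪x, T y⟫_𝕜
  -- `c` rotates `z` onto the positive real axis; at `z = 0` the junk value `c = 0` still works.
  set c : 𝕜 := conj z / ‖z‖
  have hcz : c * z = ‖z‖ := by
    rw [div_mul_eq_mul_div, RCLike.conj_mul, ← ofReal_pow, ← ofReal_div, sq, mul_self_div_self]
  have hc : ‖c‖ ^ 2 ≤ 1 := by
    rw [sq_le_one_iff₀ (norm_nonneg c), norm_div, norm_conj, norm_ofReal, abs_norm]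
    exact div_self_le_one _
  have h := hT.re_inner_nonneg_right (x - c • y)
  rw [hT.re_inner_sub_smul_eq, hcz, ofReal_re] at h
  nlinarith [hT.re_inner_nonneg_right y]

theorem re_inner_apply_self_le (T : E →L[𝕜] E) (x : E) : re ⟪x, T x⟫_𝕜 ≤ ‖T‖ * ‖x‖ ^ 2 :=
  calc re ⟪x, T x⟫_𝕜 ≤ ‖x‖ * ‖T x‖ := re_inner_le_norm x (T x)
    _ ≤ ‖x‖ * (‖T‖ * ‖x‖) := by gcongr; exact T.le_opNorm x
    _ = ‖T‖ * ‖x‖ ^ 2 := by ring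

end ContinuousLinearMap

section Integral

variable {E : Type*} [NormedAddCommGroup E] [InnerProductSpace ℂ E] [CompleteSpace E]
  {μ : ℝ → E →L[ℂ] E} {a b : ℝ}

theorem inner_intervalIntegral_apply (hμ : IntervalIntegrable μ volume a b)
    (x y : E) : ⟪x, (∫ s in a..b, μ s) y⟫_ℂ = ∫ s in a..b, ⟪x, μ s y⟫_ℂ :=
  (((innerSL ℂ x).comp (ContinuousLinearMap.apply ℂ E y)).intervalIntegral_comp_comm hμ).symm

theorem two_mul_norm_inner_intervalIntegral_smul_le {f : ℝ → ℂ} {M : ℝ} (hab : a ≤ b)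
    (hμ : ContinuousOn μ (Icc a b)) (hf : ContinuousOn f (Icc a b))
    (hpos : ∀ s ∈ Icc a b, (μ s).IsPositive) (hM : ∀ s ∈ Icc a b, ‖f s‖ ≤ M) (x y : E) :
    2 * ‖⟪x, (∫ s in a..b, f s • μ s) y⟫_ℂ‖ ≤
      M * re (⟪x, (∫ s in a..b, μ s) x⟫_ℂ + ⟪y, (∫ s in a..b, μ s) y⟫_ℂ) := by
  have hμi : IntervalIntegrable μ volume a b := hμ.intervalIntegrable_of_Icc hab
  have hbound : ∀ s ∈ Icc a b,
      ‖f s * ⟪x, μ s y⟫_ℂ‖ ≤ M * re (⟪x, μ s x⟫_ℂ + ⟪y, μ s y⟫_ℂ) / 2 := by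
    intro s hs
    have := (hpos s hs).two_mul_norm_inner_le x y
    rw [norm_mul, map_add, mul_div_assoc]
    exact mul_le_mul (hM s hs) (by linarith) (norm_nonneg _) ((norm_nonneg _).trans (hM s hs))
  have hfμi : IntervalIntegrable (fun s => f s • μ s) volume a b :=
    (hf.smul hμ).intervalIntegrable_of_Icc hab
  have hqi : IntervalIntegrable (fun s => ⟪x, μ s x⟫_ℂ + ⟪y, μ s y⟫_ℂ) volume a b :=
    ContinuousOn.intervalIntegrable_of_Icc hab (by fun_prop)
  have hsum : ⟪x, (∫ s in a..b, μ s) x⟫_ℂ + ⟪y, (∫ s in a..b, μ s) y⟫_ℂ =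
      ∫ s in a..b, (⟪x, μ s x⟫_ℂ + ⟪y, μ s y⟫_ℂ) := by
    rw [inner_intervalIntegral_apply hμi, inner_intervalIntegral_apply hμi,
      intervalIntegral.integral_add] <;>
    exact ContinuousOn.intervalIntegrable_of_Icc hab (by fun_prop)
  have hT : ⟪x, (∫ s in a..b, f s • μ s) y⟫_ℂ = ∫ s in a..b, f s * ⟪x, μ s y⟫_ℂ := by
    simp only [inner_intervalIntegral_apply hfμi, smul_apply, inner_smul_right]
  calc 2 * ‖⟪x, (∫ s in a..b, f s • μ s) y⟫_ℂ‖
      ≤ 2 * ∫ s in a..b, M * re (⟪x, μ s x⟫_ℂ + ⟪y, μ s y⟫_ℂ) / 2 := by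
        rw [hT]
        gcongr
        refine intervalIntegral.norm_integral_le_of_norm_le hab
          (ae_of_all _ fun s hs => hbound s (Ioc_subset_Icc_self hs)) ?_
        exact ContinuousOn.intervalIntegrable_of_Icc hab (by fun_prop)
    _ = M * ∫ s in a..b, re (⟪x, μ s x⟫_ℂ + ⟪y, μ s y⟫_ℂ) := by
        rw [intervalIntegral.integral_div, intervalIntegral.integral_const_mul]; ring
    _ = _ := by rw [intervalIntegral.intervalIntegral_re hqi, hsum]

end Integral

/-- If μ(s) is a continuous family of positive semidefinite bounded
self-adjoint operators on a Hilbert space for s ∈ [a,b] and f : [a,b] → ℂ is continuous,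
then ‖∫_a^b f(s) μ(s) ds‖ ≤ (max_{s∈[a,b]} |f(s)|) ‖∫_a^b μ(s) ds‖. -/
theorem norm_integral_smul_psd_le {H : Type*} [NormedAddCommGroup H]
    [InnerProductSpace ℂ H] [CompleteSpace H]
    (a b : ℝ) (hab : a ≤ b) (μ : ℝ → H →L[ℂ] H) (f : ℝ → ℂ)
    (hμc : ContinuousOn μ (Set.Icc a b)) (hfc : ContinuousOn f (Set.Icc a b))
    (hsa : ∀ s ∈ Set.Icc a b, ContinuousLinearMap.adjoint (μ s) = μ s)
    (hpsd : ∀ s ∈ Set.Icc a b, ∀ v : H, 0 ≤ (⟪(μ s) v, v⟫_ℂ).re) :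
    ‖∫ s in a..b, f s • μ s‖ ≤
      (⨆ s : Set.Icc a b, ‖f s‖) * ‖∫ s in a..b, μ s‖ := by
  set M := ⨆ s : Set.Icc a b, ‖f s‖
  set A := ∫ s in a..b, μ s
  have hpos : ∀ s ∈ Icc a b, (μ s).IsPositive := fun s hs =>
    ContinuousLinearMap.isPositive_def'.mpr
      ⟨ContinuousLinearMap.isSelfAdjoint_iff'.mpr (hsa s hs), hpsd s hs⟩
  have hM : ∀ s ∈ Icc a b, ‖f s‖ ≤ M := fun s hs =>
    le_ciSup_set (isCompact_Icc.bddAbove_image hfc.norm) hs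
  have hM0 : 0 ≤ M := Real.iSup_nonneg fun _ => norm_nonneg _
  refine ContinuousLinearMap.opNorm_le_of_re_inner_le (by positivity) fun x y hx hy => ?_
  have hxy := two_mul_norm_inner_intervalIntegral_smul_le hab hμc hfc hpos hM y x
  have hA : re (⟪y, A y⟫_ℂ + ⟪x, A x⟫_ℂ) ≤ 2 * ‖A‖ :=
    calc re (⟪y, A y⟫_ℂ + ⟪x, A x⟫_ℂ) = re ⟪y, A y⟫_ℂ + re ⟪x, A x⟫_ℂ := map_add _ _ _
      _ ≤ ‖A‖ * ‖y‖ ^ 2 + ‖A‖ * ‖x‖ ^ 2 :=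
        add_le_add (A.re_inner_apply_self_le y) (A.re_inner_apply_self_le x)
      _ = 2 * ‖A‖ := by rw [hx, hy]; ring
  have hMA := mul_le_mul_of_nonneg_left hA hM0
  calc re ⟪(∫ s in a..b, f s • μ s) x, y⟫_ℂ
      ≤ ‖⟪y, (∫ s in a..b, f s • μ s) x⟫_ℂ‖ := (re_le_norm _).trans (norm_inner_symm _ _).le
    _ ≤ M * ‖A‖ := by linarith
end

section
/- If a disk of radius r centered at ξ lies entirely in the interior of a compact convex set Ω₀, and ζ₀ is a point on the boundary of Ω₀, then the total variation of the argument of ζ(s) − ζ₀ as ζ(s) traverses the circle of radius r about ξ equals 4 arcsin(r/|ζ₀ − ξ|), which is strictly less than 2π. -/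
/-!
Write `ζ₀ - ξ = d e^{iφ}`; since the closed disk lies in the interior of `Ω₀` and `ζ₀` does not,
`ρ = d / r > 1`. After the substitution `u = s / r - φ` the integrand becomes
`r⁻¹ |f u|` with `f u = (1 - ρ cos u) / (1 + ρ² - 2ρ cos u) = d/du arg (e^{iu} - ρ)`,
which has the primitive `arctan (sin u / (cos u - ρ))`. The sign of `f` changes exactly at the
two tangent directions `u = ±arccos ρ⁻¹`, and along each of the two arcs they cut out the argument
moves monotonically by the angle `2 arcsin ρ⁻¹` that the disk subtends at `ζ₀`.
-/

open Real intervalIntegral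

/-- `circleArgDeriv ρ u = d/du arg (exp (u * I) - ρ)`. -/
noncomputable def circleArgDeriv (ρ u : ℝ) : ℝ :=
  (1 - ρ * cos u) / (1 + ρ ^ 2 - 2 * ρ * cos u)

lemma re_inv_one_sub_mul_exp_neg (ρ u : ℝ) :
    ((1 - ρ * Complex.exp (-u * Complex.I))⁻¹).re = circleArgDeriv ρ u := by
  have hre : (Complex.exp (-u * Complex.I)).re = cos u := by
    rw [← Complex.ofReal_neg, Complex.exp_ofReal_mul_I_re, cos_neg]
  have him : (Complex.exp (-u * Complex.I)).im = -sin u := by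
    rw [← Complex.ofReal_neg, Complex.exp_ofReal_mul_I_im, sin_neg]
  rw [Complex.inv_re, Complex.normSq_apply, circleArgDeriv]
  simp only [Complex.sub_re, Complex.sub_im, Complex.re_ofReal_mul, Complex.im_ofReal_mul,
    Complex.one_re, Complex.one_im, hre, him]
  congr 1
  linear_combination ρ ^ 2 * sin_sq_add_cos_sq u

lemma im_I_mul_exp_div_sub (ξ ζ₀ : ℂ) {r : ℝ} (hr : r ≠ 0) (θ : ℝ) :
    (Complex.I * Complex.exp (θ * Complex.I) /
        (ξ + r * Complex.exp (θ * Complex.I) - ζ₀)).im =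
      r⁻¹ * circleArgDeriv (‖ζ₀ - ξ‖ / r) (θ - (ζ₀ - ξ).arg) := by
  have hpolar := Complex.norm_mul_exp_arg_mul_I (ζ₀ - ξ)
  have hrot : Complex.exp (-↑(θ - (ζ₀ - ξ).arg) * Complex.I) =
      Complex.exp ((ζ₀ - ξ).arg * Complex.I) / Complex.exp (θ * Complex.I) := by
    rw [← Complex.exp_sub]; push_cast; ring_nf
  have hfactor : Complex.I * Complex.exp (θ * Complex.I) /
      (ξ + r * Complex.exp (θ * Complex.I) - ζ₀) = Complex.I * ((r⁻¹ : ℝ) *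
        (1 - (‖ζ₀ - ξ‖ / r : ℝ) * Complex.exp (-↑(θ - (ζ₀ - ξ).arg) * Complex.I))⁻¹) := by
    rw [hrot, show ξ + r * Complex.exp (θ * Complex.I) - ζ₀ =
      r * Complex.exp (θ * Complex.I) - ‖ζ₀ - ξ‖ * Complex.exp ((ζ₀ - ξ).arg * Complex.I) by
        rw [hpolar]; ring]
    have he : Complex.exp (θ * Complex.I) ≠ 0 := Complex.exp_ne_zero _
    have hr' : (r : ℂ) ≠ 0 := by exact_mod_cast hr
    push_cast
    field_simp
  rw [hfactor, Complex.I_mul_im, Complex.re_ofReal_mul, re_inv_one_sub_mul_exp_neg]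

section OutsidePoint

variable {ρ : ℝ}

lemma cos_sub_neg_of_one_lt (hρ : 1 < ρ) (u : ℝ) : cos u - ρ < 0 := by
  linarith [cos_le_one u]

lemma one_add_sq_sub_two_mul_cos_pos (hρ : 1 < ρ) (u : ℝ) : 0 < 1 + ρ ^ 2 - 2 * ρ * cos u := by
  nlinarith [cos_le_one u]

lemma continuous_circleArgDeriv (hρ : 1 < ρ) : Continuous (circleArgDeriv ρ) := by
  unfold circleArgDeriv
  exact Continuous.div (by fun_prop) (by fun_prop)
    fun u => (one_add_sq_sub_two_mul_cos_pos hρ u).ne'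

lemma hasDerivAt_arctan_sin_div_cos_sub (hρ : 1 < ρ) (u : ℝ) :
    HasDerivAt (fun u => arctan (sin u / (cos u - ρ))) (circleArgDeriv ρ u) u := by
  have hden := (cos_sub_neg_of_one_lt hρ u).ne
  refine ((hasDerivAt_sin u).div ((hasDerivAt_cos u).sub_const ρ) hden).arctan.congr_deriv ?_
  have hnum : cos u * (cos u - ρ) - sin u * -sin u = 1 - ρ * cos u := by
    linear_combination sin_sq_add_cos_sq u
  have hsq : 1 + (sin u / (cos u - ρ)) ^ 2 = (1 + ρ ^ 2 - 2 * ρ * cos u) / (cos u - ρ) ^ 2 := by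
    field_simp
    linear_combination sin_sq_add_cos_sq u
  have hD := (one_add_sq_sub_two_mul_cos_pos hρ u).ne'
  rw [Pi.div_apply, hnum, hsq, circleArgDeriv]
  field_simp

lemma integral_circleArgDeriv (hρ : 1 < ρ) (a b : ℝ) :
    ∫ u in a..b, circleArgDeriv ρ u =
      arctan (sin b / (cos b - ρ)) - arctan (sin a / (cos a - ρ)) :=
  integral_eq_sub_of_hasDerivAt (fun u _ => hasDerivAt_arctan_sin_div_cos_sub hρ u)
    ((continuous_circleArgDeriv hρ).intervalIntegrable a b)

lemma circleArgDeriv_nonneg (hρ : 1 < ρ) {u : ℝ} (hcos : cos u ≤ ρ⁻¹) :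
    0 ≤ circleArgDeriv ρ u := by
  have : ρ * cos u ≤ 1 := by
    calc ρ * cos u ≤ ρ * ρ⁻¹ := by gcongr
      _ = 1 := mul_inv_cancel₀ (by linarith)
  exact div_nonneg (by linarith) (one_add_sq_sub_two_mul_cos_pos hρ u).le

lemma circleArgDeriv_nonpos (hρ : 1 < ρ) {u : ℝ} (hcos : ρ⁻¹ ≤ cos u) :
    circleArgDeriv ρ u ≤ 0 := by
  have : 1 ≤ ρ * cos u := by
    calc 1 = ρ * ρ⁻¹ := (mul_inv_cancel₀ (by linarith)).symm
      _ ≤ ρ * cos u := by gcongr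
  exact div_nonpos_of_nonpos_of_nonneg (by linarith) (one_add_sq_sub_two_mul_cos_pos hρ u).le

lemma arctan_sin_div_cos_sub_arccos_inv (hρ : 1 < ρ) :
    arctan (sin (arccos ρ⁻¹) / (cos (arccos ρ⁻¹) - ρ)) = -arcsin ρ⁻¹ := by
  have hρ0 : 0 < ρ := by linarith
  have hx : ρ⁻¹ < 1 := inv_lt_one_of_one_lt₀ hρ
  have hx0 : 0 < ρ⁻¹ := inv_pos.mpr hρ0
  have hs : 0 < 1 - ρ⁻¹ ^ 2 := by nlinarith
  rw [sin_arccos, cos_arccos (by linarith) hx.le, arcsin_eq_arctan ⟨by linarith, hx⟩,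
    ← arctan_neg]
  congr 1
  have hsq := sq_sqrt hs.le
  have hsqrt := (sqrt_pos.mpr hs).ne'
  generalize √(1 - ρ⁻¹ ^ 2) = t at hsq hsqrt ⊢
  have hρsq : 1 - ρ ^ 2 ≠ 0 := by nlinarith
  field_simp
  rw [hsq]
  field_simp
  ring


lemma integral_abs_circleArgDeriv_sub (hρ : 1 < ρ) (φ : ℝ) :
    ∫ θ in (0 : ℝ)..2 * π, |circleArgDeriv ρ (θ - φ)| = 4 * arcsin ρ⁻¹ := by
  set u₀ := arccos ρ⁻¹
  have hcos₀ : cos u₀ = ρ⁻¹ :=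
    cos_arccos (by linarith [inv_pos.mpr (zero_lt_one.trans hρ)]) (inv_le_one_of_one_le₀ hρ.le)
  have hu₀ : 0 ≤ u₀ ∧ u₀ ≤ π := ⟨arccos_nonneg _, arccos_le_pi _⟩
  have hA₀ : arctan (sin u₀ / (cos u₀ - ρ)) = -arcsin ρ⁻¹ :=
    arctan_sin_div_cos_sub_arccos_inv hρ
  have hA₁ : arctan (sin (-u₀) / (cos (-u₀) - ρ)) = arcsin ρ⁻¹ := by
    rw [sin_neg, cos_neg, neg_div, arctan_neg, hA₀, neg_neg]
  have hA₂ : arctan (sin (2 * π - u₀) / (cos (2 * π - u₀) - ρ)) = arcsin ρ⁻¹ := by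
    rw [sin_two_pi_sub, cos_two_pi_sub, neg_div, arctan_neg, hA₀, neg_neg]
  have hnear : ∫ u in -u₀..u₀, |circleArgDeriv ρ u| = 2 * arcsin ρ⁻¹ := by
    have hle : -u₀ ≤ u₀ := by linarith
    rw [integral_congr (g := fun u => -circleArgDeriv ρ u), integral_neg,
      integral_circleArgDeriv hρ, hA₀, hA₁]
    · ring
    intro u hu
    rw [Set.uIcc_of_le hle] at hu
    refine abs_of_nonpos (circleArgDeriv_nonpos hρ ?_)
    rw [← cos_abs u, ← hcos₀]
    exact cos_le_cos_of_nonneg_of_le_pi (abs_nonneg _) hu₀.2 (abs_le.2 hu)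
  have hfar : ∫ u in u₀..2 * π - u₀, |circleArgDeriv ρ u| = 2 * arcsin ρ⁻¹ := by
    have hle : u₀ ≤ 2 * π - u₀ := by linarith
    rw [integral_congr (g := circleArgDeriv ρ), integral_circleArgDeriv hρ, hA₀, hA₂]
    · ring
    intro u hu
    rw [Set.uIcc_of_le hle] at hu
    refine abs_of_nonneg (circleArgDeriv_nonneg hρ ?_)
    rw [← hcos₀]
    rcases le_total u π with h | h
    · exact cos_le_cos_of_nonneg_of_le_pi hu₀.1 h hu.1
    · rw [← cos_two_pi_sub u]
      exact cos_le_cos_of_nonneg_of_le_pi hu₀.1 (by linarith) (by linarith [hu.2])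
  have hper : Function.Periodic (fun u => |circleArgDeriv ρ u|) (2 * π) := fun u => by
    simp only [circleArgDeriv, cos_add_two_pi]
  have hint : ∀ a b, IntervalIntegrable (fun u => |circleArgDeriv ρ u|) MeasureTheory.volume a b :=
    fun a b => (continuous_circleArgDeriv hρ).abs.intervalIntegrable a b
  calc ∫ θ in (0 : ℝ)..2 * π, |circleArgDeriv ρ (θ - φ)|
      = ∫ u in -u₀..-u₀ + 2 * π, |circleArgDeriv ρ u| := by
        rw [integral_comp_sub_right (fun u => |circleArgDeriv ρ u|), zero_sub,
          ← hper.intervalIntegral_add_eq (-φ) (-u₀), neg_add_eq_sub]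
    _ = (∫ u in -u₀..u₀, |circleArgDeriv ρ u|) + ∫ u in u₀..2 * π - u₀, |circleArgDeriv ρ u| := by
        rw [integral_add_adjacent_intervals (hint _ _) (hint _ _), neg_add_eq_sub]
    _ = 4 * arcsin ρ⁻¹ := by rw [hnear, hfar]; ring

end OutsidePoint

theorem total_variation_arg_circle_general (Ω₀ : Set ℂ) (ξ : ℂ) (r : ℝ) (hr : 0 < r)
    (hdisk : Metric.closedBall ξ r ⊆ interior Ω₀) (ζ₀ : ℂ) (hζ₀ : ζ₀ ∈ frontier Ω₀) :
    (∫ s in (0 : ℝ)..(2 * Real.pi * r),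
        |((Complex.I * Complex.exp (Complex.I * s / r)) /
            (ξ + r * Complex.exp (Complex.I * s / r) - ζ₀)).im|) =
      4 * Real.arcsin (r / ‖ζ₀ - ξ‖) ∧
    4 * Real.arcsin (r / ‖ζ₀ - ξ‖) < 2 * Real.pi := by
  have hfar : r < ‖ζ₀ - ξ‖ := by
    have hout : ζ₀ ∉ Metric.closedBall ξ r := fun h => hζ₀.2 (hdisk h)
    simpa [dist_eq_norm] using hout
  have hρ : 1 < ‖ζ₀ - ξ‖ / r := (one_lt_div hr).2 hfar
  refine ⟨?_, ?_⟩
  · have hangle : ∀ s : ℝ, Complex.I * s / r = ((s / r : ℝ) : ℂ) * Complex.I := fun s => by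
      push_cast; ring
    simp_rw [hangle, im_I_mul_exp_div_sub ξ ζ₀ hr.ne', abs_mul, abs_inv, abs_of_pos hr]
    rw [integral_const_mul, integral_comp_div (fun θ => |circleArgDeriv _ (θ - _)|) hr.ne',
      zero_div, mul_div_cancel_right₀ _ hr.ne', smul_eq_mul, inv_mul_cancel_left₀ hr.ne',
      integral_abs_circleArgDeriv_sub hρ, inv_div]
  · linarith [arcsin_lt_pi_div_two.2 ((div_lt_one (hr.trans hfar)).2 hfar)]

/-- If the closed disk of radius r about ξ lies in the interior of a
compact convex set Ω₀ and ζ₀ ∈ ∂Ω₀, then the total variation of arg(ζ(s) − ζ₀) as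
ζ(s) = ξ + r e^{is/r} traverses the circle of radius r about ξ (unit speed, so
d/ds arg(ζ(s) − ζ₀) = Im(ζ'(s)/(ζ(s) − ζ₀))) equals 4 arcsin(r/|ζ₀ − ξ|) < 2π. -/
theorem total_variation_arg_circle (Ω₀ : Set ℂ) (hconv : Convex ℝ Ω₀)
    (hcomp : IsCompact Ω₀) (ξ : ℂ) (r : ℝ) (hr : 0 < r)
    (hdisk : Metric.closedBall ξ r ⊆ interior Ω₀) (ζ₀ : ℂ) (hζ₀ : ζ₀ ∈ frontier Ω₀) :
    (∫ s in (0 : ℝ)..(2 * Real.pi * r),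
        |((Complex.I * Complex.exp (Complex.I * s / r)) /
            (ξ + r * Complex.exp (Complex.I * s / r) - ζ₀)).im|) =
      4 * Real.arcsin (r / ‖ζ₀ - ξ‖) ∧
    4 * Real.arcsin (r / ‖ζ₀ - ξ‖) < 2 * Real.pi :=
  total_variation_arg_circle_general Ω₀ ξ r hr hdisk ζ₀ hζ₀
end
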